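/- arXiv:2203.10414 — 2 statements merged into one kernel-verified Lean document; each statement's English description precedes it below -/
import Mathlib

section
/- Let T > 0 and let u be a classical solution of the Fornberg–Whitham equation on [0,T)×ℝ. Assume that either u(t,x) ≥ 0 for all (t,x) ∈ [0,T)×ℝ or u(t,x) ≤ 0 for all (t,x) ∈ [0,T)×ℝ, and that the quantity H(t) = ∫_ℝ u(t,x) dx is finite and independent of t ∈ [0,T). If u vanishes identically on a nonempty open subset of (0,T)×ℝ, then u(t,x) = 0 for all (t,x) ∈ [0,T)×ℝ. -/
open MeasureTheory Set

/-- The inverse Helmholtz operator `Λ⁻² = (1 - ∂ₓ²)⁻¹` on the line, given by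
convolution with the kernel `e^{-|x|}/2`. -/
noncomputable def lam2 (w : ℝ → ℝ) (x : ℝ) : ℝ :=
  (1/2) * ∫ y : ℝ, Real.exp (-|x - y|) * w y

/-- A classical solution of the Fornberg-Whitham equation
`uₜ + (3/2) u uₓ = ∂ₓΛ⁻²u` on `[0,T) × ℝ`. -/
def IsFWSolution (T : ℝ) (u : ℝ → ℝ → ℝ) : Prop :=
  (∀ t ∈ Set.Ico (0:ℝ) T,
    ContDiff ℝ 1 (u t) ∧
    (∃ C : ℝ, ∀ x, |u t x| ≤ C) ∧ Integrable (u t) ∧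
    (∃ C : ℝ, ∀ x, |deriv (u t) x| ≤ C) ∧ Integrable (deriv (u t))) ∧
  (∀ t ∈ Set.Ioo (0:ℝ) T, ∀ x : ℝ, DifferentiableAt ℝ (fun s => u s x) t) ∧
  (∀ t ∈ Set.Ioo (0:ℝ) T, ∀ x : ℝ,
    deriv (fun s => u s x) t + (3/2) * u t x * deriv (u t) x =
      deriv (lam2 (u t)) x)

open Filter Topology Real

/-! At a point `(t₀, x₀)` of `Ω` the equation reduces to `∂ₓΛ⁻²u(t₀, ·) = 0` on an interval
`[a, b]` on which `u(t₀, ·)` vanishes. Writing `F(x) = ∫_{-∞}^x e^y w(y) dy` and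
`G(x) = ∫_x^∞ e^{-y} w(y) dy`, one has `Λ⁻²w = (e^{-x} F + e^x G) / 2` and
`∂ₓΛ⁻²w = (e^x G - e^{-x} F) / 2`. Both `F` and `G` are constant across `[a, b]`, so
`F(a) = e^{2a} G(b) = e^{2b} G(b)`, whence `F(a) = G(b) = 0`; for a signed `w` this forces `w = 0`
outside `[a, b]` as well. Hence `H(t₀) = 0`, and by conservation of `H` and the sign condition,
every `u(t, ·)` vanishes. -/

section HalfLineIntegrals

variable {E : Type*} [NormedAddCommGroup E] [NormedSpace ℝ E] [CompleteSpace E] {f : ℝ → E}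

theorem hasDerivAt_setIntegral_Iic (hf : Continuous f) (hi : ∀ z, IntegrableOn f (Iic z))
    (x : ℝ) : HasDerivAt (fun z => ∫ y in Iic z, f y) (f x) x := by
  have h : (fun z => ∫ y in Iic z, f y) = fun z => (∫ y in Iic 0, f y) + ∫ y in (0:ℝ)..z, f y := by
    funext z
    rw [← intervalIntegral.integral_Iic_sub_Iic (hi 0) (hi z), add_sub_cancel]
  rw [h]
  exact (intervalIntegral.integral_hasDerivAt_right (hf.intervalIntegrable 0 x)
    hf.aestronglyMeasurable.stronglyMeasurableAtFilter hf.continuousAt).const_add _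

theorem hasDerivAt_setIntegral_Ioi (hf : Continuous f) (hi : ∀ z, IntegrableOn f (Ioi z))
    (x : ℝ) : HasDerivAt (fun z => ∫ y in Ioi z, f y) (-f x) x := by
  have h : (fun z => ∫ y in Ioi z, f y) = fun z => (∫ y in Ioi 0, f y) - ∫ y in (0:ℝ)..z, f y := by
    funext z
    rw [← intervalIntegral.integral_Ioi_sub_Ioi' (hi 0) (hi z), sub_sub_cancel]
  rw [h]
  exact (intervalIntegral.integral_hasDerivAt_right (hf.intervalIntegrable 0 x)
    hf.aestronglyMeasurable.stronglyMeasurableAtFilter hf.continuousAt).const_sub _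

end HalfLineIntegrals

theorem ae_imp_eq_zero_of_setIntegral_mul_eq_zero {α : Type*} [MeasurableSpace α] {μ : Measure α}
    {g w : α → ℝ} {s : Set α} (hs : MeasurableSet s) (hg : ∀ y, 0 < g y) (hw : ∀ y, 0 ≤ w y)
    (hi : IntegrableOn (fun y => g y * w y) s μ) (h : ∫ y in s, g y * w y ∂μ = 0) :
    ∀ᵐ y ∂μ, y ∈ s → w y = 0 := by
  have h0 := (setIntegral_eq_zero_iff_of_nonneg_ae
    (.of_forall fun y => mul_nonneg (hg y).le (hw y)) hi).mp h
  rw [EventuallyEq, ae_restrict_iff' hs] at h0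
  filter_upwards [h0] with y hy hys
  simpa [(hg y).ne'] using hy hys

theorem eq_zero_of_integral_eq_zero {w : ℝ → ℝ} (hw : Continuous w) (hwi : Integrable w)
    (hsign : (∀ x, 0 ≤ w x) ∨ ∀ x, w x ≤ 0) (h : ∫ x, w x = 0) : w = 0 := by
  refine (hw.ae_eq_iff_eq volume continuous_zero).mp ?_
  rcases hsign with hpos | hneg
  · exact (integral_eq_zero_iff_of_nonneg hpos hwi).mp h
  · have hneg0 := (integral_eq_zero_iff_of_nonneg (fun x => neg_nonneg.2 (hneg x)) hwi.neg).mp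
      (by simp [integral_neg, h])
    filter_upwards [hneg0] with x hx
    simpa using hx

section InverseHelmholtz

variable {w : ℝ → ℝ}

noncomputable def expIntegralIic (w : ℝ → ℝ) (z : ℝ) : ℝ := ∫ y in Iic z, exp y * w y

noncomputable def expIntegralIoi (w : ℝ → ℝ) (z : ℝ) : ℝ := ∫ y in Ioi z, exp (-y) * w y

theorem MeasureTheory.Integrable.integrableOn_exp_mul_Iic (hw : Integrable w) (z : ℝ) :
    IntegrableOn (fun y => exp y * w y) (Iic z) := by
  refine hw.integrableOn.bdd_mul (c := exp z) continuous_exp.aestronglyMeasurable ?_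
  rw [ae_restrict_iff' measurableSet_Iic]
  exact .of_forall fun y hy => by simpa using exp_le_exp.2 hy

theorem MeasureTheory.Integrable.integrableOn_exp_neg_mul_Ioi (hw : Integrable w) (z : ℝ) :
    IntegrableOn (fun y => exp (-y) * w y) (Ioi z) := by
  refine hw.integrableOn.bdd_mul (c := exp (-z))
    (continuous_exp.comp continuous_neg).aestronglyMeasurable ?_
  rw [ae_restrict_iff' measurableSet_Ioi]
  exact .of_forall fun y hy => by simpa using exp_le_exp.2 (neg_le_neg (le_of_lt hy))

theorem lam2_eq (hw : Integrable w) (z : ℝ) :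
    lam2 w z = (exp (-z) * expIntegralIic w z + exp z * expIntegralIoi w z) / 2 := by
  have hint : Integrable (fun y => exp (-|z - y|) * w y) :=
    hw.bdd_mul (c := 1) (by fun_prop) (.of_forall fun y => by simp)
  have hIic : ∫ y in Iic z, exp (-|z - y|) * w y = exp (-z) * expIntegralIic w z := by
    rw [expIntegralIic, ← integral_const_mul]
    refine setIntegral_congr_fun measurableSet_Iic fun y (hy : y ≤ z) => ?_
    rw [abs_of_nonneg (sub_nonneg.2 hy), ← mul_assoc, ← exp_add]
    ring_nf
  have hIoi : ∫ y in Ioi z, exp (-|z - y|) * w y = exp z * expIntegralIoi w z := by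
    rw [expIntegralIoi, ← integral_const_mul]
    refine setIntegral_congr_fun measurableSet_Ioi fun y (hy : z < y) => ?_
    rw [abs_of_neg (sub_neg.2 hy), ← mul_assoc, ← exp_add]
    ring_nf
  rw [lam2, ← intervalIntegral.integral_Iic_add_Ioi hint.integrableOn hint.integrableOn, hIic,
    hIoi]
  ring

theorem hasDerivAt_lam2 (hw : Continuous w) (hwi : Integrable w) (x : ℝ) :
    HasDerivAt (lam2 w) ((exp x * expIntegralIoi w x - exp (-x) * expIntegralIic w x) / 2) x := by
  have hIic : HasDerivAt (expIntegralIic w) (exp x * w x) x :=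
    hasDerivAt_setIntegral_Iic (by fun_prop) (hwi.integrableOn_exp_mul_Iic ·) x
  have hIoi : HasDerivAt (expIntegralIoi w) (-(exp (-x) * w x)) x :=
    hasDerivAt_setIntegral_Ioi (by fun_prop) (hwi.integrableOn_exp_neg_mul_Ioi ·) x
  rw [funext (lam2_eq hwi)]
  exact ((((hasDerivAt_neg x).exp.fun_mul hIic).fun_add
    ((hasDerivAt_exp x).fun_mul hIoi)).div_const 2).congr_deriv (by ring)

theorem lam2_neg (w : ℝ → ℝ) : lam2 (-w) = -lam2 w := by
  funext z
  simp [lam2, integral_neg]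

theorem expIntegral_eq_zero_of_deriv_lam2_eq_zero (hw : Continuous w) (hwi : Integrable w)
    (hpos : ∀ x, 0 ≤ w x) {a b : ℝ} (hab : a < b) (hzero : ∀ x ∈ Icc a b, w x = 0)
    (ha : deriv (lam2 w) a = 0) (hb : deriv (lam2 w) b = 0) :
    expIntegralIic w a = 0 ∧ expIntegralIoi w b = 0 := by
  have hgap : ∀ g : ℝ → ℝ, ∫ y in a..b, g y * w y = 0 := fun g =>
    intervalIntegral.integral_zero_ae (.of_forall fun y hy => by
      rw [hzero y (Ioc_subset_Icc_self ((uIoc_of_le hab.le) ▸ hy)), mul_zero])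
  have hFb : expIntegralIic w b = expIntegralIic w a := by
    rw [← sub_eq_zero]
    unfold expIntegralIic
    rw [intervalIntegral.integral_Iic_sub_Iic
      (hwi.integrableOn_exp_mul_Iic a) (hwi.integrableOn_exp_mul_Iic b), hgap]
  have hGa : expIntegralIoi w a = expIntegralIoi w b := by
    rw [← sub_eq_zero]
    unfold expIntegralIoi
    rw [intervalIntegral.integral_Ioi_sub_Ioi'
      (hwi.integrableOn_exp_neg_mul_Ioi a) (hwi.integrableOn_exp_neg_mul_Ioi b), hgap]
  have hFnn : 0 ≤ expIntegralIic w a := setIntegral_nonneg measurableSet_Iic fun y _ =>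
    mul_nonneg (exp_pos y).le (hpos y)
  have hGnn : 0 ≤ expIntegralIoi w b := setIntegral_nonneg measurableSet_Ioi fun y _ =>
    mul_nonneg (exp_pos _).le (hpos y)
  set F := expIntegralIic w a
  set G := expIntegralIoi w b
  rw [(hasDerivAt_lam2 hw hwi a).deriv, hGa] at ha
  rw [(hasDerivAt_lam2 hw hwi b).deriv, hFb] at hb
  have hexp : exp (-b) * exp a < exp (-a) * exp b := by
    rw [← exp_add, ← exp_add]; exact exp_lt_exp.2 (by linarith)
  have hG : G = 0 := by
    nlinarith [exp_pos a, exp_pos b, exp_pos (-a), exp_pos (-b)]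
  refine ⟨?_, hG⟩
  rw [hG, mul_zero, zero_sub, div_eq_zero_iff] at ha
  simpa [(exp_pos (-a)).ne'] using ha

theorem eq_zero_of_nonneg_of_deriv_lam2_eq_zero (hw : Continuous w) (hwi : Integrable w)
    (hpos : ∀ x, 0 ≤ w x) {a b : ℝ} (hab : a < b) (hzero : ∀ x ∈ Icc a b, w x = 0)
    (ha : deriv (lam2 w) a = 0) (hb : deriv (lam2 w) b = 0) : w = 0 := by
  obtain ⟨hF, hG⟩ := expIntegral_eq_zero_of_deriv_lam2_eq_zero hw hwi hpos hab hzero ha hb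
  have hleft := ae_imp_eq_zero_of_setIntegral_mul_eq_zero measurableSet_Iic exp_pos hpos
    (hwi.integrableOn_exp_mul_Iic a) hF
  have hright := ae_imp_eq_zero_of_setIntegral_mul_eq_zero measurableSet_Ioi (fun y => exp_pos (-y))
    hpos (hwi.integrableOn_exp_neg_mul_Ioi b) hG
  refine (hw.ae_eq_iff_eq volume continuous_zero).mp ?_
  filter_upwards [hleft, hright] with y hyl hyr
  rcases le_or_gt y a with hya | hay
  · exact hyl hya
  rcases le_or_gt y b with hyb | hby
  · exact hzero y ⟨hay.le, hyb⟩
  · exact hyr hby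

theorem eq_zero_of_deriv_lam2_eq_zero (hw : Continuous w) (hwi : Integrable w)
    (hsign : (∀ x, 0 ≤ w x) ∨ ∀ x, w x ≤ 0) {a b : ℝ} (hab : a < b)
    (hzero : ∀ x ∈ Icc a b, w x = 0) (ha : deriv (lam2 w) a = 0) (hb : deriv (lam2 w) b = 0) :
    w = 0 := by
  rcases hsign with hpos | hneg
  · exact eq_zero_of_nonneg_of_deriv_lam2_eq_zero hw hwi hpos hab hzero ha hb
  · rw [← neg_eq_zero]
    refine eq_zero_of_nonneg_of_deriv_lam2_eq_zero hw.neg hwi.neg (fun x => neg_nonneg.2 (hneg x))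
      hab (fun x hx => by simp [hzero x hx]) ?_ ?_ <;>
    simp [lam2_neg, deriv.neg', ha, hb]

end InverseHelmholtz

theorem IsFWSolution.deriv_lam2_eq_zero {T : ℝ} {u : ℝ → ℝ → ℝ} (hu : IsFWSolution T u)
    {t x : ℝ} (ht : t ∈ Ioo 0 T) (hloc : ∀ᶠ p in 𝓝 (t, x), u p.1 p.2 = 0) :
    deriv (lam2 (u t)) x = 0 := by
  have htime : deriv (fun s => u s x) t = 0 := by
    have h : (fun s => u s x) =ᶠ[𝓝 t] fun _ => 0 :=
      ((Continuous.prodMk_left x).tendsto t).eventually hloc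
    rw [h.deriv_eq, deriv_const]
  have hspace : deriv (u t) x = 0 := by
    have h : u t =ᶠ[𝓝 x] fun _ => 0 :=
      ((Continuous.prodMk_right t).tendsto x).eventually hloc
    rw [h.deriv_eq, deriv_const]
  have hpde := hu.2.2 t ht x
  rw [htime, hspace] at hpde
  linarith

theorem fornbergWhitham_unique_continuation_general (T : ℝ)
    (u : ℝ → ℝ → ℝ) (hu : IsFWSolution T u)
    (hsign : (∀ t ∈ Set.Ico (0:ℝ) T, ∀ x : ℝ, 0 ≤ u t x) ∨
             (∀ t ∈ Set.Ico (0:ℝ) T, ∀ x : ℝ, u t x ≤ 0))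
    (hcons : ∃ c : ℝ, ∀ t ∈ Set.Ico (0:ℝ) T, (∫ x : ℝ, u t x) = c)
    (Ω : Set (ℝ × ℝ)) (hΩopen : IsOpen Ω) (hΩne : Ω.Nonempty)
    (hΩsub : Ω ⊆ Set.Ioo (0:ℝ) T ×ˢ Set.univ)
    (hvan : ∀ p ∈ Ω, u p.1 p.2 = 0) :
    ∀ t ∈ Set.Ico (0:ℝ) T, ∀ x : ℝ, u t x = 0 := by
  obtain ⟨c, hc⟩ := hcons
  obtain ⟨⟨t₀, x₀⟩, hp⟩ := hΩne
  have ht₀ : t₀ ∈ Ioo 0 T := (hΩsub hp).1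
  have hreg : ∀ t ∈ Ico 0 T, Continuous (u t) ∧ Integrable (u t) ∧
      ((∀ x, 0 ≤ u t x) ∨ ∀ x, u t x ≤ 0) := fun t ht =>
    ⟨((hu.1 t ht).1).continuous, (hu.1 t ht).2.2.1, hsign.imp (· t ht) (· t ht)⟩
  obtain ⟨hcont, hint, hsign₀⟩ := hreg t₀ (Ioo_subset_Ico_self ht₀)
  obtain ⟨ε, hε, hball⟩ := Metric.nhds_basis_closedBall.mem_iff.mp
    ((hΩopen.preimage (Continuous.prodMk_right t₀)).mem_nhds hp)
  rw [Real.closedBall_eq_Icc] at hball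
  have hderiv : ∀ x ∈ Icc (x₀ - ε) (x₀ + ε), deriv (lam2 (u t₀)) x = 0 := fun x hx =>
    hu.deriv_lam2_eq_zero ht₀ (eventually_of_mem (hΩopen.mem_nhds (hball hx)) hvan)
  have hzero : u t₀ = 0 := eq_zero_of_deriv_lam2_eq_zero hcont hint hsign₀ (by linarith)
    (fun x hx => hvan _ (hball hx)) (hderiv _ (left_mem_Icc.2 (by linarith)))
    (hderiv _ (right_mem_Icc.2 (by linarith)))
  have hc0 : c = 0 := by simp [← hc t₀ (Ioo_subset_Ico_self ht₀), hzero]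
  intro t ht
  obtain ⟨hcont, hint, hsign⟩ := hreg t ht
  exact congrFun (eq_zero_of_integral_eq_zero hcont hint hsign (by rw [hc t ht, hc0]))

/-- **Unique continuation for the Fornberg-Whitham equation (section 3.2).**
A signed classical solution of the Fornberg-Whitham equation whose quantity
`H(t) = ∫_ℝ u(t,x) dx` is finite and conserved, and which vanishes on a nonempty
open subset of `(0,T) × ℝ`, vanishes identically. -/
theorem fornbergWhitham_unique_continuation (T : ℝ) (hT : 0 < T)
    (u : ℝ → ℝ → ℝ) (hu : IsFWSolution T u)
    (hsign : (∀ t ∈ Set.Ico (0:ℝ) T, ∀ x : ℝ, 0 ≤ u t x) ∨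
             (∀ t ∈ Set.Ico (0:ℝ) T, ∀ x : ℝ, u t x ≤ 0))
    (hcons : ∃ c : ℝ, ∀ t ∈ Set.Ico (0:ℝ) T, (∫ x : ℝ, u t x) = c)
    (Ω : Set (ℝ × ℝ)) (hΩopen : IsOpen Ω) (hΩne : Ω.Nonempty)
    (hΩsub : Ω ⊆ Set.Ioo (0:ℝ) T ×ˢ Set.univ)
    (hvan : ∀ p ∈ Ω, u p.1 p.2 = 0) :
    ∀ t ∈ Set.Ico (0:ℝ) T, ∀ x : ℝ, u t x = 0 :=
  fornbergWhitham_unique_continuation_general T u hu hsign hcons Ω hΩopen hΩne hΩsub hvan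
end

section
/- Let T > 0 and let (u,ρ) be a classical solution of the modified Euler–Poisson system on [0,T)×ℝ that is conservative and satisfies ρ(t,x) ≥ 0 for all (t,x) ∈ [0,T)×ℝ. If there is a nonempty open set Ω ⊆ (0,T)×ℝ on which both u and ρ vanish identically, then ρ(t,x) = 0 for all (t,x) ∈ [0,T)×ℝ and u satisfies the inviscid Burgers equation ∂ₜu + u·∂ₓu = 0 at every point of (0,T)×ℝ. -/
/-!
On a time slice `t₀` meeting `Ω`, `u` vanishes near `(t₀, x)` for `x` in an interval, so the
momentum equation forces `∂ₓΛ⁻²ρ(t₀,·) = 0` there. Differentiating once more and using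
`(1 - ∂ₓ²)Λ⁻²ρ = ρ` gives `Λ⁻²ρ(t₀,x₀) = ρ(t₀,x₀) = 0`; since the kernel `e^{-|x|}` is positive and
`ρ ≥ 0`, `ρ(t₀,·) ≡ 0`. Conservation then gives `H ≡ 0`, hence `ρ ≡ 0`, and the momentum
equation reduces to Burgers' equation.
-/

open MeasureTheory Set

/-- A classical solution of the modified Euler-Poisson system in its nonlocal form
`ρₜ + (uρ)ₓ = 0`, `uₜ + u uₓ + ∂ₓΛ⁻²ρ = 0` on `[0,T) × ℝ`: `u` and `ρ` are
continuously differentiable on `(0,T) × ℝ`, `ρ(t,·)` is continuous, bounded and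
integrable for each `t`, and the system holds pointwise on `(0,T) × ℝ`. -/
def IsMEPSolution (T : ℝ) (u ρ : ℝ → ℝ → ℝ) : Prop :=
  ContDiffOn ℝ 1 (fun p : ℝ × ℝ => u p.1 p.2) (Set.Ioo (0:ℝ) T ×ˢ Set.univ) ∧
  ContDiffOn ℝ 1 (fun p : ℝ × ℝ => ρ p.1 p.2) (Set.Ioo (0:ℝ) T ×ˢ Set.univ) ∧
  (∀ t ∈ Set.Ico (0:ℝ) T,
    Continuous (ρ t) ∧ (∃ C : ℝ, ∀ x, |ρ t x| ≤ C) ∧ Integrable (ρ t)) ∧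
  (∀ t ∈ Set.Ioo (0:ℝ) T, ∀ x : ℝ,
    deriv (fun s => ρ s x) t + deriv (fun y => u t y * ρ t y) x = 0) ∧
  (∀ t ∈ Set.Ioo (0:ℝ) T, ∀ x : ℝ,
    deriv (fun s => u s x) t + u t x * deriv (u t) x + deriv (lam2 (ρ t)) x = 0)

/-- The solution is conservative: `H(t) = ∫_ℝ ρ(t,x) dx` is independent of `t`. -/
def IsConservativeMEP (T : ℝ) (ρ : ℝ → ℝ → ℝ) : Prop :=
  ∃ c : ℝ, ∀ t ∈ Set.Ico (0:ℝ) T, (∫ x : ℝ, ρ t x) = c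

open Filter Topology Real

theorem Continuous.eq_zero_of_integral_eq_zero_of_nonneg {X : Type*} [TopologicalSpace X]
    [MeasurableSpace X] [OpensMeasurableSpace X] {μ : Measure X} [μ.IsOpenPosMeasure]
    {f : X → ℝ} (hc : Continuous f) (hi : Integrable f μ) (hnn : 0 ≤ f)
    (h0 : ∫ x, f x ∂μ = 0) : f = 0 :=
  (hc.ae_eq_iff_eq μ continuous_const).mp ((integral_eq_zero_iff_of_nonneg hnn hi).mp h0)

theorem hasDerivAt_integral_Iic {E : Type*} [NormedAddCommGroup E] [NormedSpace ℝ E]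
    [CompleteSpace E] {g : ℝ → E} (hg : Continuous g) (hint : ∀ c, IntegrableOn g (Iic c))
    (x : ℝ) : HasDerivAt (fun b => ∫ y in Iic b, g y) (g x) x := by
  have hsplit : (fun b => ∫ y in Iic b, g y) = fun b => (∫ y in Iic x, g y) + ∫ y in x..b, g y :=
    funext fun b => by rw [← intervalIntegral.integral_Iic_sub_Iic (hint x) (hint b)]; abel
  rw [hsplit]
  exact (intervalIntegral.integral_hasDerivAt_right (hg.intervalIntegrable _ _)
    (hg.stronglyMeasurableAtFilter _ _) hg.continuousAt).const_add _

theorem hasDerivAt_integral_Ici {E : Type*} [NormedAddCommGroup E] [NormedSpace ℝ E]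
    [CompleteSpace E] {g : ℝ → E} (hg : Continuous g) (hint : ∀ c, IntegrableOn g (Ici c))
    (x : ℝ) : HasDerivAt (fun b => ∫ y in Ici b, g y) (-g x) x := by
  have hsplit : (fun b => ∫ y in Ici b, g y) = fun b => (∫ y in Ici x, g y) - ∫ y in x..b, g y :=
    funext fun b => by rw [← intervalIntegral.integral_Ici_sub_Ici' (hint x) (hint b)]; abel
  rw [hsplit]
  exact (intervalIntegral.integral_hasDerivAt_right (hg.intervalIntegrable _ _)
    (hg.stronglyMeasurableAtFilter _ _) hg.continuousAt).const_sub _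

@[simp]
theorem lam2_zero : lam2 0 = 0 := by
  funext x
  simp [lam2]

section Helmholtz

variable {f : ℝ → ℝ}

noncomputable def lam2Left (f : ℝ → ℝ) (x : ℝ) : ℝ :=
  ∫ y in Iic x, exp y * f y

noncomputable def lam2Right (f : ℝ → ℝ) (x : ℝ) : ℝ :=
  ∫ y in Ici x, exp (-y) * f y

theorem integrableOn_Iic_exp_mul (hf : Integrable f) (c : ℝ) :
    IntegrableOn (fun y => exp y * f y) (Iic c) := by
  refine hf.integrableOn.bdd_mul continuous_exp.aestronglyMeasurable (c := exp c) ?_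
  filter_upwards [ae_restrict_mem measurableSet_Iic] with y hy
  simpa using hy

theorem integrableOn_Ici_exp_neg_mul (hf : Integrable f) (c : ℝ) :
    IntegrableOn (fun y => exp (-y) * f y) (Ici c) := by
  have hexp : Continuous fun y : ℝ => exp (-y) := by fun_prop
  refine hf.integrableOn.bdd_mul hexp.aestronglyMeasurable (c := exp (-c)) ?_
  filter_upwards [ae_restrict_mem measurableSet_Ici] with y hy
  simpa using hy

theorem integrable_exp_neg_abs_sub_mul (hf : Integrable f) (x : ℝ) :
    Integrable (fun y => exp (-|x - y|) * f y) := by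
  refine hf.bdd_mul (by fun_prop : Continuous fun y => exp (-|x - y|)).aestronglyMeasurable
    (c := 1) (ae_of_all _ fun y => ?_)
  simp [abs_nonneg]

theorem lam2_eq_lam2Left_add_lam2Right (hf : Integrable f) (x : ℝ) :
    lam2 f x = (exp (-x) * lam2Left f x + exp x * lam2Right f x) / 2 := by
  have hleft : ∫ y in Iic x, exp (-|x - y|) * f y = exp (-x) * lam2Left f x := by
    rw [lam2Left, ← integral_const_mul]
    refine setIntegral_congr_fun measurableSet_Iic fun y (hy : y ≤ x) => ?_
    rw [abs_of_nonneg (sub_nonneg.mpr hy), ← mul_assoc, ← exp_add]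
    ring_nf
  have hright : ∫ y in Ici x, exp (-|x - y|) * f y = exp x * lam2Right f x := by
    rw [lam2Right, ← integral_const_mul]
    refine setIntegral_congr_fun measurableSet_Ici fun y (hy : x ≤ y) => ?_
    rw [abs_of_nonpos (sub_nonpos.mpr hy), ← mul_assoc, ← exp_add]
    ring_nf
  have hK := integrable_exp_neg_abs_sub_mul hf x
  rw [lam2, ← intervalIntegral.integral_Iic_add_Ioi (b := x) hK.integrableOn hK.integrableOn,
    ← integral_Ici_eq_integral_Ioi, hleft, hright]
  ring

theorem hasDerivAt_lam2Left (hc : Continuous f) (hf : Integrable f) (x : ℝ) :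
    HasDerivAt (lam2Left f) (exp x * f x) x :=
  hasDerivAt_integral_Iic (by fun_prop) (integrableOn_Iic_exp_mul hf) x

theorem hasDerivAt_lam2Right (hc : Continuous f) (hf : Integrable f) (x : ℝ) :
    HasDerivAt (lam2Right f) (-(exp (-x) * f x)) x :=
  hasDerivAt_integral_Ici (by fun_prop) (integrableOn_Ici_exp_neg_mul hf) x

theorem hasDerivAt_exp_neg (x : ℝ) : HasDerivAt (fun y => exp (-y)) (-exp (-x)) x := by
  simpa using (hasDerivAt_neg x).exp

theorem hasDerivAt_lam2_s16 (hc : Continuous f) (hf : Integrable f) (x : ℝ) :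
    HasDerivAt (lam2 f) ((exp x * lam2Right f x - exp (-x) * lam2Left f x) / 2) x := by
  rw [show lam2 f = _ from funext (lam2_eq_lam2Left_add_lam2Right hf)]
  refine ((((hasDerivAt_exp_neg x).fun_mul (hasDerivAt_lam2Left hc hf x)).add
    ((hasDerivAt_exp x).fun_mul (hasDerivAt_lam2Right hc hf x))).div_const 2).congr_deriv ?_
  ring

theorem hasDerivAt_deriv_lam2 (hc : Continuous f) (hf : Integrable f) (x : ℝ) :
    HasDerivAt (deriv (lam2 f)) (lam2 f x - f x) x := by
  rw [show deriv (lam2 f) = _ from funext fun y => (hasDerivAt_lam2_s16 hc hf y).deriv,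
    lam2_eq_lam2Left_add_lam2Right hf]
  refine ((((hasDerivAt_exp x).fun_mul (hasDerivAt_lam2Right hc hf x)).sub
    ((hasDerivAt_exp_neg x).fun_mul (hasDerivAt_lam2Left hc hf x))).div_const 2).congr_deriv ?_
  have : exp x * exp (-x) = 1 := by rw [← exp_add]; simp
  linear_combination (-(f x)) * this

theorem eq_zero_of_lam2_eq_zero (hc : Continuous f) (hf : Integrable f) (hnn : 0 ≤ f) {x : ℝ}
    (h : lam2 f x = 0) : f = 0 := by
  have hK : (fun y => exp (-|x - y|) * f y) = 0 :=
    (by fun_prop : Continuous fun y => exp (-|x - y|) * f y).eq_zero_of_integral_eq_zero_of_nonneg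
      (integrable_exp_neg_abs_sub_mul hf x) (fun y => mul_nonneg (exp_pos _).le (hnn y))
      (by simpa [lam2] using h)
  funext y
  exact (mul_eq_zero.mp (congrFun hK y)).resolve_left (exp_pos _).ne'

theorem eq_zero_of_deriv_lam2_eventuallyEq_zero (hc : Continuous f) (hf : Integrable f)
    (hnn : 0 ≤ f) {x : ℝ} (hx : f x = 0) (h : deriv (lam2 f) =ᶠ[𝓝 x] 0) : f = 0 := by
  have hlam : lam2 f x - f x = 0 :=
    (hasDerivAt_deriv_lam2 hc hf x).unique ((hasDerivAt_const x 0).congr_of_eventuallyEq h)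
  exact eq_zero_of_lam2_eq_zero hc hf hnn (by linarith)

end Helmholtz

theorem modifiedEulerPoisson_unique_continuation_general (T : ℝ)
    (u ρ : ℝ → ℝ → ℝ) (hsol : IsMEPSolution T u ρ)
    (hcons : IsConservativeMEP T ρ)
    (hρnn : ∀ t ∈ Set.Ico (0:ℝ) T, ∀ x : ℝ, 0 ≤ ρ t x)
    (Ω : Set (ℝ × ℝ)) (hΩopen : IsOpen Ω) (hΩne : Ω.Nonempty)
    (hΩsub : Ω ⊆ Set.Ioo (0:ℝ) T ×ˢ Set.univ)
    (hvanu : ∀ p ∈ Ω, u p.1 p.2 = 0)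
    (hvanρ : ∀ p ∈ Ω, ρ p.1 p.2 = 0) :
    (∀ t ∈ Set.Ico (0:ℝ) T, ∀ x : ℝ, ρ t x = 0) ∧
    (∀ t ∈ Set.Ioo (0:ℝ) T, ∀ x : ℝ,
      deriv (fun s => u s x) t + u t x * deriv (u t) x = 0) := by
  obtain ⟨-, -, hreg, -, hmom⟩ := hsol
  obtain ⟨c, hmass⟩ := hcons
  obtain ⟨⟨t₀, x₀⟩, hp₀⟩ := hΩne
  have ht₀ : t₀ ∈ Ioo 0 T := (hΩsub hp₀).1
  have ht₀' : t₀ ∈ Ico 0 T := Ioo_subset_Ico_self ht₀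
  have hlam : deriv (lam2 (ρ t₀)) =ᶠ[𝓝 x₀] 0 := by
    filter_upwards [(hΩopen.preimage (Continuous.prodMk_right t₀)).mem_nhds hp₀] with x hx
    have hu : (fun s => u s x) =ᶠ[𝓝 t₀] 0 :=
      eventually_of_mem ((hΩopen.preimage (Continuous.prodMk_left x)).mem_nhds hx)
        fun s hs => hvanu _ hs
    simpa [hu.deriv_eq, hvanu _ hx] using hmom t₀ ht₀ x
  obtain ⟨hcont₀, -, hint₀⟩ := hreg t₀ ht₀'
  have hρt₀ : ρ t₀ = 0 := eq_zero_of_deriv_lam2_eventuallyEq_zero hcont₀ hint₀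
    (hρnn t₀ ht₀') (hvanρ _ hp₀) hlam
  have hρ : ∀ t ∈ Ico 0 T, ρ t = 0 := fun t ht => by
    obtain ⟨hcont, -, hint⟩ := hreg t ht
    refine hcont.eq_zero_of_integral_eq_zero_of_nonneg hint (hρnn t ht) ?_
    rw [hmass t ht, ← hmass t₀ ht₀', hρt₀]
    simp
  refine ⟨fun t ht x => congrFun (hρ t ht) x, fun t ht x => ?_⟩
  simpa [hρ t (Ioo_subset_Ico_self ht)] using hmom t ht x

/-- **Theorem 5.1 (unique continuation for the modified Euler-Poisson system).**
If a conservative classical solution `(u,ρ)` with `ρ ≥ 0` vanishes on a nonempty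
open set `Ω ⊆ (0,T) × ℝ`, then `ρ ≡ 0` and `u` solves the inviscid Burgers
equation `uₜ + u uₓ = 0`. -/
theorem modifiedEulerPoisson_unique_continuation (T : ℝ) (hT : 0 < T)
    (u ρ : ℝ → ℝ → ℝ) (hsol : IsMEPSolution T u ρ)
    (hcons : IsConservativeMEP T ρ)
    (hρnn : ∀ t ∈ Set.Ico (0:ℝ) T, ∀ x : ℝ, 0 ≤ ρ t x)
    (Ω : Set (ℝ × ℝ)) (hΩopen : IsOpen Ω) (hΩne : Ω.Nonempty)
    (hΩsub : Ω ⊆ Set.Ioo (0:ℝ) T ×ˢ Set.univ)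
    (hvanu : ∀ p ∈ Ω, u p.1 p.2 = 0)
    (hvanρ : ∀ p ∈ Ω, ρ p.1 p.2 = 0) :
    (∀ t ∈ Set.Ico (0:ℝ) T, ∀ x : ℝ, ρ t x = 0) ∧
    (∀ t ∈ Set.Ioo (0:ℝ) T, ∀ x : ℝ,
      deriv (fun s => u s x) t + u t x * deriv (u t) x = 0) :=
  modifiedEulerPoisson_unique_continuation_general T u ρ hsol hcons hρnn Ω hΩopen hΩne hΩsub hvanu
    hvanρ
end
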